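/- Let C be a ℤ_p-chain complex each of whose chain groups is a finitely generated free ℤ[ℤ/pℤ]-module (generator of ℤ/pℤ acting as t). Let h ∈ H^i_s(C) be a torsion s-cohomology class and suppose h = [dφ]_s for a cochain φ ∈ C^i. Then h ≠ 0 if and only if there exist an integer n ≥ 2 and a chain c ∈ C_i such that d∂c ∈ n·C_{i−1} and φ(dc) is not divisible by n. -/

import Mathlib

/-- A `ℤ_p`-chain complex (in nonnegative degrees) whose degree-`n` chain group is the
finitely generated free ℤ-module with basis `{t^k σ : σ ∈ F n, 0 ≤ k ≤ p−1}`, i.e. the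
free ℤ-module on `F n × ZMod p`; the action of `t` cyclically permutes the basis, and
commutes with the boundary. Equivalently, each chain group is a finitely generated free
`ℤ[ℤ/pℤ]`-module with the generator of `ℤ/pℤ` acting as `t`. -/
structure ZpFreeComplex (p : ℕ) where
  F : ℕ → Type
  fin : ∀ n, Fintype (F n)
  bd : ∀ n, ((F (n + 1) × ZMod p → ℤ) →+ (F n × ZMod p → ℤ))
  bd_bd : ∀ n x, bd n (bd (n + 1) x) = 0
  bd_t : ∀ n (c : F (n + 1) × ZMod p → ℤ),
    bd n (fun z => c (z.1, z.2 - 1)) = fun z => bd n c (z.1, z.2 - 1)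

namespace ZpFreeComplex

variable {p : ℕ} (X : ZpFreeComplex p)

/-- degree-`n` chains -/
abbrev Ch (n : ℕ) := X.F n × ZMod p → ℤ

/-- degree-`n` integral cochains -/
abbrev Co (n : ℕ) := (X.F n × ZMod p → ℤ) →+ ℤ

/-- the chain map `t^k` -/
def tCh (n k : ℕ) : X.Ch n →+ X.Ch n where
  toFun c := fun z => c (z.1, z.2 - (k : ZMod p))
  map_zero' := rfl
  map_add' _ _ := rfl

/-- `s = 1 + t + ⋯ + t^{p−1}` on chains -/
def sCh (n : ℕ) : X.Ch n →+ X.Ch n := ∑ k ∈ Finset.range p, X.tCh n k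

/-- `d = 1 − t` on chains -/
def dCh (n : ℕ) : X.Ch n →+ X.Ch n := AddMonoidHom.id _ - X.tCh n 1

/-- the cochain map `t^k`, `φ ↦ φ ∘ t^k` -/
def tCo (n k : ℕ) : X.Co n →+ X.Co n where
  toFun φ := φ.comp (X.tCh n k)
  map_zero' := by ext x; simp
  map_add' _ _ := by ext x; simp

/-- `s = 1 + t + ⋯ + t^{p−1}` on cochains -/
def sCo (n : ℕ) : X.Co n →+ X.Co n where
  toFun φ := φ.comp (X.sCh n)
  map_zero' := by ext x; simp
  map_add' _ _ := by ext x; simp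

/-- `d = 1 − t` on cochains -/
def dCo (n : ℕ) : X.Co n →+ X.Co n where
  toFun φ := φ.comp (X.dCh n)
  map_zero' := by ext x; simp
  map_add' _ _ := by ext x; simp

/-- the coboundary `δφ = φ ∘ ∂` -/
def cb (n : ℕ) : X.Co n →+ X.Co (n + 1) where
  toFun φ := φ.comp (X.bd n)
  map_zero' := by ext x; simp
  map_add' _ _ := by ext x; simp

/-- the boundary out of degree `n` (the zero map in degree 0). -/
def bdFrom : ∀ n : ℕ, (X.Ch n →+ X.Ch (n - 1))
  | 0 => 0
  | (j + 1) => X.bd j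

lemma tCh_one (n : ℕ) (c : X.Ch n) : X.tCh n 1 c = fun z => c (z.1, z.2 - 1) := by
  funext z
  simp [tCh]

lemma tCh_succ (n k : ℕ) (c : X.Ch n) :
    X.tCh n (k + 1) c = X.tCh n 1 (X.tCh n k c) := by
  funext z
  show c (z.1, z.2 - ((k + 1 : ℕ) : ZMod p)) = c (z.1, z.2 - ((1 : ℕ) : ZMod p) - ((k : ℕ) : ZMod p))
  have h2 : z.2 - ((k + 1 : ℕ) : ZMod p) = z.2 - ((1 : ℕ) : ZMod p) - ((k : ℕ) : ZMod p) := by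
    push_cast
    ring
  rw [h2]

lemma tCh_zero (n : ℕ) (c : X.Ch n) : X.tCh n 0 c = c := by
  funext z
  simp [tCh]

lemma bd_tCh (n k : ℕ) (c : X.Ch (n + 1)) :
    X.bd n (X.tCh (n + 1) k c) = X.tCh n k (X.bd n c) := by
  induction k with
  | zero => rw [tCh_zero, tCh_zero]
  | succ k ih =>
      rw [X.tCh_succ (n + 1) k c, X.tCh_succ n k (X.bd n c)]
      rw [X.tCh_one (n + 1) (X.tCh (n + 1) k c)]
      rw [X.bd_t n (X.tCh (n + 1) k c)]
      rw [ih]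
      rw [← X.tCh_one n (X.tCh n k (X.bd n c))]

lemma bd_sCh (n : ℕ) (c : X.Ch (n + 1)) :
    X.bd n (X.sCh (n + 1) c) = X.sCh n (X.bd n c) := by
  simp only [sCh, AddMonoidHom.finset_sum_apply, map_sum, bd_tCh]

lemma bd_dCh (n : ℕ) (c : X.Ch (n + 1)) :
    X.bd n (X.dCh (n + 1) c) = X.dCh n (X.bd n c) := by
  simp only [dCh, AddMonoidHom.sub_apply, AddMonoidHom.id_apply, map_sub, bd_tCh]

end ZpFreeComplex

namespace ZpFreeComplex

variable {p : ℕ} (X : ZpFreeComplex p)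

/-- cocycles of the `d`-cochain complex `C*_d = ker d ⊆ C*` -/
def dcocycles (n : ℕ) : AddSubgroup (X.Co n) := (X.dCo n).ker ⊓ (X.cb n).ker

/-- coboundaries of the `d`-cochain complex -/
def dcobds : ∀ n : ℕ, AddSubgroup (X.Co n)
  | 0 => ⊥
  | (j + 1) => AddSubgroup.map (X.cb j) ((X.dCo j).ker)

/-- the `d`-cohomology `H^n_d` -/
abbrev Hd (n : ℕ) := X.dcocycles n ⧸ (X.dcobds n).addSubgroupOf (X.dcocycles n)

/-- the `d`-cohomology class `[φ]_d` of a cocycle of `C*_d` -/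
def clsd (n : ℕ) (φ : X.Co n) (h : φ ∈ X.dcocycles n) : X.Hd n :=
  QuotientAddGroup.mk ⟨φ, h⟩

/-- cocycles of the `s`-cochain complex `C*_s = ker s ⊆ C*` -/
def scocycles (n : ℕ) : AddSubgroup (X.Co n) := (X.sCo n).ker ⊓ (X.cb n).ker

/-- coboundaries of the `s`-cochain complex -/
def scobds : ∀ n : ℕ, AddSubgroup (X.Co n)
  | 0 => ⊥
  | (j + 1) => AddSubgroup.map (X.cb j) ((X.sCo j).ker)

/-- the `s`-cohomology `H^n_s` -/
abbrev Hs (n : ℕ) := X.scocycles n ⧸ (X.scobds n).addSubgroupOf (X.scocycles n)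

/-- the `s`-cohomology class `[φ]_s` of a cocycle of `C*_s` -/
def clss (n : ℕ) (φ : X.Co n) (h : φ ∈ X.scocycles n) : X.Hs n :=
  QuotientAddGroup.mk ⟨φ, h⟩

/-- the boundary of the `d`-chain complex `C^d = ker d ⊆ C`, i.e. the restriction
of the boundary of `C`. -/
def bdD (n : ℕ) : ↥((X.dCh (n + 1)).ker) →+ ↥((X.dCh n).ker) :=
  AddMonoidHom.codRestrict ((X.bd n).comp (X.dCh (n + 1)).ker.subtype) ((X.dCh n).ker)
    (fun x => by
      have hx : X.dCh (n + 1) (x : X.Ch (n + 1)) = 0 := x.2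
      simp only [AddMonoidHom.mem_ker, AddMonoidHom.coe_comp, AddSubgroup.coe_subtype,
        Function.comp_apply]
      rw [← bd_dCh, hx, map_zero])

/-- the boundary of the `s`-chain complex `C^s = ker s ⊆ C`, i.e. the restriction
of the boundary of `C`. -/
def bdS (n : ℕ) : ↥((X.sCh (n + 1)).ker) →+ ↥((X.sCh n).ker) :=
  AddMonoidHom.codRestrict ((X.bd n).comp (X.sCh (n + 1)).ker.subtype) ((X.sCh n).ker)
    (fun x => by
      have hx : X.sCh (n + 1) (x : X.Ch (n + 1)) = 0 := x.2
      simp only [AddMonoidHom.mem_ker, AddMonoidHom.coe_comp, AddSubgroup.coe_subtype,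
        Function.comp_apply]
      rw [← bd_sCh, hx, map_zero])

lemma cb_dCo (n : ℕ) (φ : X.Co n) :
    X.cb n (X.dCo n φ) = X.dCo (n + 1) (X.cb n φ) := by
  ext x
  show (X.dCo n φ) (X.bd n x) = (X.cb n φ) (X.dCh (n + 1) x)
  show φ (X.dCh n (X.bd n x)) = φ (X.bd n (X.dCh (n + 1) x))
  rw [bd_dCh]

lemma cb_sCo (n : ℕ) (φ : X.Co n) :
    X.cb n (X.sCo n φ) = X.sCo (n + 1) (X.cb n φ) := by
  ext x
  show φ (X.sCh n (X.bd n x)) = φ (X.bd n (X.sCh (n + 1) x))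
  rw [bd_sCh]

/-- the coboundary of `C*_d`, i.e. the restriction of the coboundary of `C*`. -/
def cbD (n : ℕ) : ↥((X.dCo n).ker) →+ ↥((X.dCo (n + 1)).ker) :=
  AddMonoidHom.codRestrict ((X.cb n).comp (X.dCo n).ker.subtype) ((X.dCo (n + 1)).ker)
    (fun φ => by
      have hφ : X.dCo n (φ : X.Co n) = 0 := φ.2
      simp only [AddMonoidHom.mem_ker, AddMonoidHom.coe_comp, AddSubgroup.coe_subtype,
        Function.comp_apply]
      rw [← cb_dCo, hφ, map_zero])

end ZpFreeComplex

open ZpFreeComplex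

/-! If `dφ = δψ` with `sψ = 0` and `d∂c = n w`, then `∂c` is constant mod `n` along each free
orbit of `t`, hence congruent mod `n` to an element `s b`, and `φ(dc) = ψ(∂c) ≡ (sψ)(b) = 0`.
Conversely, if all these divisibilities hold, then `∂c + s y ↦ φ(dc)` is a well-defined functional
on `∂C_{i} + sC_{i-1}` which is divisible by `m` on every element of the form `m x`. Read off in
Smith normal form bases, such a functional on a subgroup of a finitely generated free abelian group
extends to the whole group; the extension is the `ψ` with `sψ = 0` and `δψ = dφ`. -/

theorem Int.forall_dvd_iff_forall_two_le {M : Type*} [AddCommGroup M] {u : M} {v : ℤ} :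
    (∀ m : ℤ, (∃ w, u = m • w) → m ∣ v) ↔
      ∀ n : ℕ, 2 ≤ n → (∃ w, u = (n : ℤ) • w) → (n : ℤ) ∣ v := by
  refine ⟨fun h n _ ↦ h n, fun h m ⟨w, hw⟩ ↦ ?_⟩
  obtain h0 | h1 | h2 : m.natAbs = 0 ∨ m.natAbs = 1 ∨ 2 ≤ m.natAbs := by omega
  · obtain rfl : m = 0 := Int.natAbs_eq_zero.mp h0
    have hv := h (v.natAbs + 2) (by omega) ⟨0, by simp [hw]⟩
    rw [Int.eq_zero_of_dvd_of_natAbs_lt_natAbs hv (by omega)]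
  · exact (Int.isUnit_iff_natAbs_eq.mpr h1).dvd
  · refine Int.natAbs_dvd.mp (h _ h2 ⟨m.sign • w, ?_⟩)
    rw [hw, smul_smul, mul_comm, Int.sign_mul_natAbs]

theorem Submodule.exists_linearMap_comp_subtype_eq_of_dvd {M : Type*} [AddCommGroup M]
    [Module.Free ℤ M] [Module.Finite ℤ M] (N : Submodule ℤ M) (g : N →ₗ[ℤ] ℤ)
    (hg : ∀ (m : ℤ) (x : M) (y : N), (y : M) = m • x → m ∣ g y) :
    ∃ G : M →ₗ[ℤ] ℤ, G ∘ₗ N.subtype = g := by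
  obtain ⟨n, snf⟩ := N.smithNormalForm (Module.Free.chooseBasis ℤ M)
  refine ⟨snf.bM.constr ℤ (Function.extend snf.f (fun i ↦ g (snf.bN i) / snf.a i) 0),
    snf.bN.ext fun i ↦ ?_⟩
  rw [LinearMap.comp_apply, Submodule.subtype_apply, snf.snf, map_zsmul, Module.Basis.constr_basis,
    snf.f.injective.extend_apply, smul_eq_mul]
  exact Int.mul_ediv_cancel' (hg _ _ _ (snf.snf i))

theorem LinearMap.exists_comp_eq_of_dvd {M P : Type*} [AddCommGroup M] [Module.Free ℤ M]
    [Module.Finite ℤ M] [AddCommGroup P] (T : P →ₗ[ℤ] M) (Φ : P →ₗ[ℤ] ℤ)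
    (hΦ : ∀ (m : ℤ) (x : M) (q : P), T q = m • x → m ∣ Φ q) :
    ∃ G : M →ₗ[ℤ] ℤ, G ∘ₗ T = Φ := by
  have hker : LinearMap.ker T ≤ LinearMap.ker Φ := fun q hq ↦
    zero_dvd_iff.mp (hΦ 0 0 q (by rw [zero_smul]; exact hq))
  set g := (LinearMap.ker T).liftQ Φ hker ∘ₗ T.quotKerEquivRange.symm.toLinearMap
  have hg : ∀ q, g ⟨T q, LinearMap.mem_range_self T q⟩ = Φ q := fun q ↦ by
    simp [g, LinearMap.quotKerEquivRange_symm_apply_image]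
  obtain ⟨G, hG⟩ := (LinearMap.range T).exists_linearMap_comp_subtype_eq_of_dvd g
    fun m x ⟨_, q, rfl⟩ hq ↦ hg q ▸ hΦ m x q hq
  exact ⟨G, LinearMap.ext fun q ↦ (LinearMap.congr_fun hG ⟨T q, _⟩).trans (hg q)⟩

namespace ZpFreeComplex

variable {p : ℕ} (X : ZpFreeComplex p)

lemma dCh_apply {n : ℕ} (x : X.Ch n) (z : X.F n × ZMod p) :
    X.dCh n x z = x z - x (z.1, z.2 - 1) := by
  simp [dCh, tCh]

lemma sCh_apply [NeZero p] {n : ℕ} (x : X.Ch n) (z : X.F n × ZMod p) :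
    X.sCh n x z = ∑ k : ZMod p, x (z.1, k) := by
  calc X.sCh n x z = ∑ a ∈ Finset.range p, x (z.1, z.2 - a) := by
        simp [sCh, tCh, AddMonoidHom.finsetSum_apply]
    _ = ∑ k : ZMod p, x (z.1, z.2 - k) :=
        Finset.sum_nbij' (fun a ↦ (a : ZMod p)) ZMod.val (by simp) (by simp [ZMod.val_lt])
          (fun a ha ↦ ZMod.val_cast_of_lt (Finset.mem_range.mp ha)) (by simp) (fun _ _ ↦ rfl)
    _ = ∑ k : ZMod p, x (z.1, k) := Fintype.sum_equiv (Equiv.subLeft z.2) _ _ fun _ ↦ rfl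

lemma dCh_sCh [NeZero p] {n : ℕ} (x : X.Ch n) : X.dCh n (X.sCh n x) = 0 := by
  funext z
  simp [dCh_apply, sCh_apply]

lemma exists_eq_smul_add_sCh [NeZero p] {n : ℕ} {x : X.Ch n} {m : ℤ}
    (hx : ∃ w, X.dCh n x = m • w) : ∃ y b, x = m • y + X.sCh n b := by
  obtain ⟨w, hw⟩ := hx
  have hdvd : ∀ (σ : X.F n) (k : ℕ), m ∣ x (σ, k) - x (σ, 0) := by
    intro σ k
    induction k with
    | zero => simp
    | succ k ih =>
      have hstep : x (σ, ↑(k + 1)) - x (σ, k) = m * w (σ, ↑(k + 1)) := by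
        simpa [dCh_apply] using congrFun hw (σ, ↑(k + 1))
      rw [← sub_add_sub_cancel _ (x (σ, k)), hstep]
      exact dvd_add (dvd_mul_right _ _) ih
  refine ⟨fun z ↦ (x z - x (z.1, 0)) / m, fun z ↦ if z.2 = 0 then x (z.1, 0) else 0, ?_⟩
  funext z
  have hz := hdvd z.1 z.2.val
  rw [ZMod.natCast_zmod_val] at hz
  simp [sCh_apply, Int.mul_ediv_cancel' hz]

lemma dvd_apply_of_sCo_eq_zero [NeZero p] {n : ℕ} {ψ : X.Co n} (hψ : X.sCo n ψ = 0)
    {x : X.Ch n} {m : ℤ} (hx : ∃ w, X.dCh n x = m • w) : m ∣ ψ x := by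
  obtain ⟨y, b, rfl⟩ := X.exists_eq_smul_add_sCh hx
  have hb : ψ (X.sCh n b) = 0 := DFunLike.congr_fun hψ b
  rw [map_add, map_zsmul, hb, add_zero, smul_eq_mul]
  exact dvd_mul_right _ _

lemma exists_sCo_eq_zero_and_cb_eq_dCo [NeZero p] {j : ℕ} (φ : X.Co (j + 1))
    (hφ : ∀ (m : ℤ) (c : X.Ch (j + 1)),
      (∃ w, X.dCh j (X.bd j c) = m • w) → m ∣ φ (X.dCh (j + 1) c)) :
    ∃ ψ : X.Co j, X.sCo j ψ = 0 ∧ X.cb j ψ = X.dCo (j + 1) φ := by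
  have := X.fin j
  let T : X.Ch (j + 1) × X.Ch j →ₗ[ℤ] X.Ch j :=
    (X.bd j).toIntLinearMap.coprod (X.sCh j).toIntLinearMap
  let Φ : X.Ch (j + 1) × X.Ch j →ₗ[ℤ] ℤ :=
    (φ.comp (X.dCh (j + 1))).toIntLinearMap ∘ₗ LinearMap.fst ℤ _ _
  obtain ⟨G, hG⟩ := T.exists_comp_eq_of_dvd Φ fun m x ⟨c, y⟩ hT ↦ hφ m c ⟨X.dCh j x, by
    have hdT := congrArg (X.dCh j) hT
    rwa [LinearMap.coprod_apply, map_add, map_zsmul, AddMonoidHom.coe_toIntLinearMap,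
      AddMonoidHom.coe_toIntLinearMap, dCh_sCh, add_zero] at hdT⟩
  refine ⟨G.toAddMonoidHom, ?_, ?_⟩ <;> ext x
  · change G (X.sCh j x) = 0
    simpa [T, Φ] using LinearMap.congr_fun hG (0, x)
  · change G (X.bd j x) = φ (X.dCh (j + 1) x)
    simpa [T, Φ] using LinearMap.congr_fun hG (x, 0)

lemma clss_eq_zero_iff {n : ℕ} {φ : X.Co n} (h : φ ∈ X.scocycles n) :
    X.clss n φ h = 0 ↔ φ ∈ X.scobds n :=
  (QuotientAddGroup.eq_zero_iff _).trans AddSubgroup.mem_addSubgroupOf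

lemma dCo_mem_scobds_iff [NeZero p] {i : ℕ} (φ : X.Co i) :
    X.dCo i φ ∈ X.scobds i ↔ ∀ (c : X.Ch i) (m : ℤ),
      (∃ w, X.dCh (i - 1) (X.bdFrom i c) = m • w) → m ∣ φ (X.dCh i c) := by
  cases i with
  | zero =>
    rw [scobds, AddSubgroup.mem_bot, DFunLike.ext_iff]
    refine forall_congr' fun c ↦ ⟨fun h m _ ↦ h ▸ dvd_zero m, fun h ↦ ?_⟩
    exact zero_dvd_iff.mp (h 0 ⟨0, by simp [bdFrom]⟩)
  | succ j =>
    refine ⟨?_, fun h ↦ X.exists_sCo_eq_zero_and_cb_eq_dCo φ fun m c ↦ h c m⟩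
    rintro ⟨ψ, hψ, hψφ⟩ c m hc
    change m ∣ X.dCo (j + 1) φ c
    rw [← hψφ]
    exact X.dvd_apply_of_sCo_eq_zero hψ hc

end ZpFreeComplex

theorem certificate_for_nontrivial_s_class_general
    (p : ℕ) (hp : p.Prime) (X : ZpFreeComplex p)
    (i : ℕ) (φ : X.Co i)
    (hmem : X.dCo i φ ∈ X.scocycles i)
    (h : X.Hs i) (hrep : X.clss i (X.dCo i φ) hmem = h) :
    h ≠ 0 ↔
      ∃ n : ℕ, 2 ≤ n ∧
        ∃ c : X.Ch i,
          (∃ w : X.Ch (i - 1), X.dCh (i - 1) (X.bdFrom i c) = (n : ℤ) • w) ∧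
          ¬ ((n : ℤ) ∣ φ (X.dCh i c)) := by
  have : NeZero p := ⟨hp.ne_zero⟩
  subst hrep
  rw [Ne, clss_eq_zero_iff, dCo_mem_scobds_iff]
  simp only [Int.forall_dvd_iff_forall_two_le]
  push Not
  exact exists_comm.trans (exists_congr fun _ ↦ exists_and_left)

/-- **Certificate for a non-trivial `s`-cohomology class.**
Let `K` be a `ℤ_p`-chain complex each of whose chain groups is a finitely generated free
`ℤ[ℤ/pℤ]`-module with the generator acting as `t` (modelled as `F n × ZMod p → ℤ` with
`t` cyclically shifting the second coordinate).  Let `h ∈ H^i_s(K)` be a torsion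
`s`-cohomology class with `h = [dφ]_s` for a cochain `φ ∈ C^i`.  Then `h ≠ 0` if and
only if there exist an integer `n ≥ 2` and a chain `c ∈ C_i` such that
`d ∂c ∈ n·C_{i−1}` and `φ(dc)` is not divisible by `n`. -/
theorem certificate_for_nontrivial_s_class
    (p : ℕ) (hp : p.Prime) (X : ZpFreeComplex p)
    (i : ℕ) (φ : X.Co i)
    (hmem : X.dCo i φ ∈ X.scocycles i)
    (h : X.Hs i) (hrep : X.clss i (X.dCo i φ) hmem = h)
    (htor : ∃ k : ℕ, 1 ≤ k ∧ k • h = 0) :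
    h ≠ 0 ↔
      ∃ n : ℕ, 2 ≤ n ∧
        ∃ c : X.Ch i,
          (∃ w : X.Ch (i - 1), X.dCh (i - 1) (X.bdFrom i c) = (n : ℤ) • w) ∧
          ¬ ((n : ℤ) ∣ φ (X.dCh i c)) :=
  certificate_for_nontrivial_s_class_general p hp X i φ hmem h hrep
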